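/- arXiv:1510.03461 — 2 statements merged into one kernel-verified Lean document; each statement's English description precedes it below -/
import Mathlib

section
/- Let r ≥ 3 and let F be an r-graph, m+1 ≥ n(F), and let p = n(H^F_{m+1}). If G is an H^F_{m+1}-free r-graph on [n], then G contains a subgraph G' that is ℋ^F_{m+1}-free with |G'| ≥ |G| − p·C(n,r−3)·C(n,2). In particular, π(H^F_{m+1}) = π(ℋ^F_{m+1}). -/
open Finset
open scoped BigOperators Classical

abbrev HG := Finset (Finset ℕ)

/-- The vertex set of a hypergraph: union of its edges. -/
def hverts (G : HG) : Finset ℕ := G.sup id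

/-- `G` is `r`-uniform: every edge has `r` vertices. -/
def Uniform (r : ℕ) (G : HG) : Prop := ∀ e ∈ G, e.card = r

/-- The pair `{u,v}` is covered in `G`: some edge contains both. -/
def Covered (G : HG) (u v : ℕ) : Prop := ∃ e ∈ G, u ∈ e ∧ v ∈ e

/-- `G` contains a copy of `F`. -/
def IsCopyIn (F G : HG) : Prop :=
  ∃ φ : ℕ → ℕ, Set.InjOn φ (hverts F : Set ℕ) ∧ ∀ e ∈ F, e.image φ ∈ G

/-- The subgraph of `G` induced by `C`. -/
def induced (G : HG) (C : Finset ℕ) : HG := G.filter (fun e => e ⊆ C)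

/-- `G` contains a member of the family `ℋ^F_p`: there is a core `C` of `p`
vertices such that the subgraph induced by `C` contains a copy of `F` and every
pair of vertices of `C` is covered in `G`. -/
def ContainsHFam (F : HG) (p : ℕ) (G : HG) : Prop :=
  ∃ C : Finset ℕ, C.card = p ∧ IsCopyIn F (induced G C) ∧
    ∀ u ∈ C, ∀ v ∈ C, u ≠ v → Covered G u v

/-- Turán number: maximum number of edges of an `r`-graph on vertex set `[n]`
satisfying the "freeness" predicate `P`. -/
noncomputable def exNum (r n : ℕ) (P : HG → Prop) : ℕ :=
  sSup {m : ℕ | ∃ G : HG, Uniform r G ∧ (∀ e ∈ G, e ⊆ Finset.range n) ∧ P G ∧ G.card = m}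

/-- The Lagrangian polynomial `p_G(x) = r! ∑_{e∈G} ∏_{i∈e} x_i`. -/
noncomputable def pPoly (r : ℕ) (G : HG) (x : ℕ → ℝ) : ℝ :=
  (r.factorial : ℝ) * ∑ e ∈ G, ∏ i ∈ e, x i

/-- The Lagrangian `λ(G)`. -/
noncomputable def lagrangian (r : ℕ) (G : HG) : ℝ :=
  sSup {v : ℝ | ∃ x : ℕ → ℝ, (∀ i, 0 ≤ x i) ∧ (∑ i ∈ hverts G, x i) = 1 ∧ v = pPoly r G x}

/-- The Lagrangian density `π_λ(F)`. -/
noncomputable def piLambda (r : ℕ) (F : HG) : ℝ :=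
  sSup {v : ℝ | ∃ G : HG, Uniform r G ∧ ¬ IsCopyIn F G ∧ v = lagrangian r G}

/-- `G` is `m`-partite. -/
def MPartite (m : ℕ) (G : HG) : Prop :=
  ∃ f : ℕ → Fin m, ∀ e ∈ G, ∀ u ∈ e, ∀ v ∈ e, u ≠ v → f u ≠ f v

/-- `ℋ^F_{m+1}` is `m`-stable. -/
def MStable (r m : ℕ) (F : HG) : Prop :=
  ∀ ε : ℝ, 0 < ε → ∃ δ : ℝ, 0 < δ ∧ ∃ n₁ : ℕ, ∀ n : ℕ, n₁ ≤ n →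
    ∀ G : HG, Uniform r G → (∀ e ∈ G, e ⊆ Finset.range n) →
      ¬ ContainsHFam F (m + 1) G →
      ((m.descFactorial r : ℝ) / (m : ℝ) ^ r - δ) * (n.choose r : ℝ) < (G.card : ℝ) →
      ∃ Z : Finset ℕ, (Z.card : ℝ) ≤ ε * n ∧
        MPartite m (G.filter (fun e => Disjoint e Z))

/-- Pairs of vertices of `C` not covered in `F`. -/
def uncovPairs (F : HG) (C : Finset ℕ) : Finset (Finset ℕ) :=
  (C.powersetCard 2).filter (fun s => ¬ ∃ e ∈ F, s ⊆ e)

/-- `H` is an expanded `p`-clique with an embedded `F` (i.e. a copy of `H^F_p`). -/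
def IsExpandedClique (r : ℕ) (F : HG) (p : ℕ) (H : HG) : Prop :=
  ∃ C : Finset ℕ, hverts F ⊆ C ∧ C.card = p ∧
    ∃ B : Finset ℕ → Finset ℕ,
      (∀ s ∈ uncovPairs F C, (B s).card = r - 2 ∧ Disjoint (B s) C) ∧
      (∀ s ∈ uncovPairs F C, ∀ t ∈ uncovPairs F C, s ≠ t → Disjoint (B s) (B t)) ∧
      H = F ∪ (uncovPairs F C).image (fun s => s ∪ B s)

/-- The balanced complete `m`-partite `r`-graph `T_r(n,m)` on vertex set `[n]`,
with parts the residue classes modulo `m`. -/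
def turanGraph (r n m : ℕ) : HG :=
  ((Finset.range n).powersetCard r).filter
    (fun e => ∀ u ∈ e, ∀ v ∈ e, u ≠ v → u % m ≠ v % m)

/-- `F` has a vertex of degree 1. -/
def HasDeg1Vertex (F : HG) : Prop :=
  ∃ v ∈ hverts F, (F.filter (fun e => v ∈ e)).card = 1

/-- `T` is a tree on `k` vertices (a connected 2-graph with `k-1` edges). -/
def IsTreeGraph (T : HG) (k : ℕ) : Prop :=
  Uniform 2 T ∧ (hverts T).card = k ∧ T.card + 1 = k ∧
    ∀ u ∈ hverts T, ∀ v ∈ hverts T,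
      Relation.ReflTransGen (fun a b => ({a, b} : Finset ℕ) ∈ T) u v

/-- The `k`-vertex tree `T` satisfies the Erdős–Sós conjecture:
`ex(n,T) ≤ n(k-2)/2` for all `n`. -/
def SatisfiesES (T : HG) (k : ℕ) : Prop :=
  ∀ n : ℕ, 2 * exNum 2 n (fun G => ¬ IsCopyIn T G) ≤ n * (k - 2)

/-- The function `f_r(x) = (∏_{i=1}^{r-1} (x+i-2)) / (x+r-3)^r`. -/
noncomputable def frf (r : ℕ) (x : ℝ) : ℝ :=
  (∏ i ∈ Finset.Icc 1 (r - 1), (x + (i : ℝ) - 2)) / (x + (r : ℝ) - 3) ^ r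

/-- `M` is the rightmost maximum of `f_r` on `[2,∞)`. -/
def IsRightmostMax (r : ℕ) (M : ℝ) : Prop :=
  2 ≤ M ∧ (∀ y : ℝ, 2 ≤ y → frf r y ≤ frf r M) ∧
    (∀ y : ℝ, 2 ≤ y → frf r y = frf r M → y ≤ M)

/-- `F` is the `(r-2)`-fold enlargement of the 2-graph `T`. -/
def IsEnlargement (r : ℕ) (T F : HG) : Prop :=
  ∃ D : Finset ℕ, D.card = r - 2 ∧ Disjoint D (hverts T) ∧ F = T.image (fun e => e ∪ D)

/-- The link of a vertex `i` in `G`. -/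
def link (G : HG) (i : ℕ) : HG := (G.filter (fun e => i ∈ e)).image (fun e => e.erase i)

/-- `λ_i = ∂p_G(x)/∂x_i = r! ∑_{f ∈ L_G(i)} ∏_{j∈f} x_j`. -/
noncomputable def lamI (r : ℕ) (G : HG) (x : ℕ → ℝ) (i : ℕ) : ℝ :=
  (r.factorial : ℝ) * ∑ f ∈ link G i, ∏ j ∈ f, x j

/-- `G` is a blowup of `L`. -/
def IsBlowup (L G : HG) : Prop :=
  ∃ V : ℕ → Finset ℕ,
    (∀ i ∈ hverts L, ∀ j ∈ hverts L, i ≠ j → Disjoint (V i) (V j)) ∧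
    ∀ e : Finset ℕ, e ∈ G ↔ ∃ f ∈ L, ∃ φ : ℕ → ℕ, (∀ i ∈ f, φ i ∈ V i) ∧ e = f.image φ

/-- `G` contains an `s`-sunflower with kernel `D`. -/
def HasSunflower (G : HG) (D : Finset ℕ) (s : ℕ) : Prop :=
  ∃ S : Finset (Finset ℕ), S ⊆ G ∧ S.card = s ∧ (∀ A ∈ S, D ⊆ A) ∧
    ∀ A ∈ S, ∀ B ∈ S, A ≠ B → A ∩ B = D

/-- `F` covers pairs: every pair of vertices of `F` lies in some edge. -/
def CoversPairs (F : HG) : Prop :=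
  ∀ u ∈ hverts F, ∀ v ∈ hverts F, u ≠ v → Covered F u v

/-- `d(G)`: the maximum average degree among nonempty subgraphs of `G`. -/
noncomputable def maxAvgDeg (G : HG) : ℝ :=
  sSup {v : ℝ | ∃ H : HG, H ⊆ G ∧ H.Nonempty ∧ v = 2 * (H.card : ℝ) / ((hverts H).card : ℝ)}

/-- Symmetrizing `v` to `u`: remove all edges containing `v` and replace them
with `{D ∪ {v} : D ∈ L_G(u)}`. -/
def symmetrize (G : HG) (u v : ℕ) : HG :=
  G.filter (fun e => v ∉ e) ∪ (G.filter (fun e => u ∈ e)).image (fun e => insert v (e.erase u))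

/-- The noncomplete transversals of an `m`-partite `r`-graph `L` with parts `A`. -/
noncomputable def noncompTrans (r m : ℕ) (L : HG) (A : Fin m → Finset ℕ) : Finset (Finset ℕ) :=
  ((Finset.univ.biUnion A).powerset).filter
    (fun S => (∀ i, (S ∩ A i).card = 1) ∧ ∃ e : Finset ℕ, e ⊆ S ∧ e.card = r ∧ e ∉ L)

/-!
Delete from `G` every edge containing a pair of codegree at most `t = p · C(n, r-3)`, where
`p = n(H^F_{m+1})`; this costs at most `C(n, 2) · t` edges. If the remaining graph contained a
member of `ℋ^F_{m+1}`, every pair of its core would have codegree `> t` in `G`. A triple lies in at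
most `C(n, r-3)` edges, so at most `t` of the edges through such a pair meet a given set of `p`
vertices; hence the uncovered pairs of the core can be expanded one at a time by edges of `G`
avoiding all vertices used before, which yields a copy of `H^F_{m+1}`.

Being `ℋ^F_{m+1}`-free is hereditary and invariant under relabelling, so averaging over
vertex-deleted subgraphs shows that `ex(n, ℋ^F_{m+1}) / C(n, r)` is eventually nonincreasing and
hence convergent, and the two Turán numbers differ by `O(n^{r-1}) = o(C(n, r))`.
-/

lemma exists_injOn_extend {α β : Type*} [DecidableEq α] [DecidableEq β] {f : α → β}
    {s t : Finset α} {u : Finset β} (hst : s ⊆ t) (hf : Set.InjOn f s) (hfu : Set.MapsTo f s u)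
    (hcard : #t ≤ #u) :
    ∃ g : α → β, Set.InjOn g t ∧ Set.MapsTo g t u ∧ Set.EqOn g f s := by
  have hfs : s.image f ⊆ u := image_subset_iff.2 hfu
  have hc : Fintype.card (t \ s : Finset α) ≤ Fintype.card (u \ s.image f : Finset β) := by
    simp only [Fintype.card_coe]
    rw [card_sdiff_of_subset hst, card_sdiff_of_subset hfs, card_image_of_injOn hf]
    omega
  obtain ⟨ι⟩ := Function.Embedding.nonempty_of_card_le hc
  set g : α → β := fun x => if h : x ∈ t \ s then ι ⟨x, h⟩ else f x
  have hgs : Set.EqOn g f s := fun x hx => dif_neg fun h => (mem_sdiff.1 h).2 hx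
  have hgt : ∀ x (h : x ∈ t \ s), g x = ι ⟨x, h⟩ := fun x h => dif_pos h
  have hnew : ∀ x ∈ t \ s, g x ∈ u \ s.image f := fun x h => hgt x h ▸ (ι ⟨x, h⟩).2
  have ht : (t : Set α) = ↑s ∪ ↑(t \ s) := by rw [← coe_union, union_sdiff_of_subset hst]
  refine ⟨g, ?_, fun x hx => ?_, hgs⟩
  · rw [ht, Set.injOn_union (disjoint_coe.2 disjoint_sdiff)]
    refine ⟨hf.congr hgs.symm, fun x hx y hy hxy => ?_, fun x hx y hy hxy => ?_⟩
    · rw [hgt x hx, hgt y hy] at hxy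
      simpa using ι.injective (Subtype.ext hxy)
    · exact (mem_sdiff.1 (hnew y hy)).2 (hxy ▸ hgs hx ▸ mem_image_of_mem f hx)
  · by_cases h : x ∈ t \ s
    · exact (mem_sdiff.1 (hnew x h)).1
    · have hxs : x ∈ s := by_contra fun hxs => h (mem_sdiff.2 ⟨hx, hxs⟩)
      exact hgs hxs ▸ hfu hxs

lemma injOn_piecewise_union {α β : Type*} [DecidableEq α] [DecidableEq β] {X Y : Finset α}
    {f g : α → β} (hXY : Disjoint X Y) (hf : Set.InjOn f X) (hg : Set.InjOn g Y)
    (hfg : Disjoint (X.image f) (Y.image g)) :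
    Set.InjOn (Y.piecewise g f) ↑(X ∪ Y) := by
  have hX : Set.EqOn (Y.piecewise g f) f X := fun x hx =>
    piecewise_eq_of_notMem _ _ _ (disjoint_left.1 hXY hx)
  have hY : Set.EqOn (Y.piecewise g f) g Y := fun y hy => piecewise_eq_of_mem _ _ _ hy
  rw [coe_union, Set.injOn_union (disjoint_coe.2 hXY)]
  refine ⟨hf.congr hX.symm, hg.congr hY.symm, fun x hx y hy hxy => ?_⟩
  rw [hX hx, hY hy] at hxy
  exact disjoint_left.1 hfg (mem_image_of_mem f hx) (hxy ▸ mem_image_of_mem g hy)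

lemma mem_hverts {v : ℕ} {G : HG} : v ∈ hverts G ↔ ∃ e ∈ G, v ∈ e := by
  simp [hverts, Finset.mem_sup]

section HFamily

variable {F G : HG} {p : ℕ}

lemma ContainsHFam.mono {G' : HG} (h : ContainsHFam F p G) (hGG' : G ⊆ G') :
    ContainsHFam F p G' := by
  obtain ⟨C, hC, ⟨φ, hφ, hφF⟩, hcov⟩ := h
  refine ⟨C, hC, ⟨φ, hφ, fun e he => filter_subset_filter _ hGG' (hφF e he)⟩,
    fun u hu v hv huv => ?_⟩
  obtain ⟨e, he, hue, hve⟩ := hcov u hu v hv huv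
  exact ⟨e, hGG' he, hue, hve⟩

lemma ContainsHFam.image {f : ℕ → ℕ} (hf : Function.Injective f) (h : ContainsHFam F p G) :
    ContainsHFam F p (G.image (·.image f)) := by
  obtain ⟨C, hC, ⟨φ, hφ, hφF⟩, hcov⟩ := h
  refine ⟨C.image f, by rw [card_image_of_injective _ hf, hC],
    ⟨f ∘ φ, hf.injOn.comp hφ (Set.mapsTo_univ _ _), fun e he => ?_⟩, fun u hu v hv huv => ?_⟩
  · obtain ⟨heG, heC⟩ := mem_filter.1 (hφF e he)
    rw [← image_image]
    exact mem_filter.2 ⟨mem_image_of_mem _ heG, image_subset_image heC⟩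
  · obtain ⟨x, hx, rfl⟩ := mem_image.1 hu
    obtain ⟨y, hy, rfl⟩ := mem_image.1 hv
    obtain ⟨e, he, hxe, hye⟩ := hcov x hx y hy fun h => huv (h ▸ rfl)
    exact ⟨_, mem_image_of_mem _ he, mem_image_of_mem f hxe, mem_image_of_mem f hye⟩

lemma not_containsHFam_image_perm (σ : Equiv.Perm ℕ) (h : ¬ ContainsHFam F p G) :
    ¬ ContainsHFam F p (G.image (·.image σ)) := fun hσ => h <| by
  simpa [image_image, Function.comp_def] using hσ.image σ.symm.injective

end HFamily

def codegree (G : HG) (s : Finset ℕ) : ℕ := #(G.filter (s ⊆ ·))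

section Codegree

variable {r n : ℕ} {G : HG}

lemma codegree_le_choose (hGu : Uniform r G) (hGn : ∀ e ∈ G, e ⊆ range n) (T : Finset ℕ) :
    codegree G T ≤ n.choose (r - #T) := by
  calc codegree G T ≤ #((range n).powersetCard (r - #T)) := by
        refine card_le_card_of_injOn (· \ T) (fun e he => ?_) (fun e he e' he' hee' => ?_)
        · obtain ⟨heG, hTe⟩ := mem_filter.1 he
          rw [mem_coe, mem_powersetCard]
          exact ⟨sdiff_subset.trans (hGn e heG), by rw [card_sdiff_of_subset hTe, hGu e heG]⟩
        · have := congrArg (· ∪ T) hee'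
          simp only at this
          rwa [sdiff_union_of_subset (mem_filter.1 he).2,
            sdiff_union_of_subset (mem_filter.1 he').2] at this
    _ = n.choose (r - #T) := by simp

/-- Every edge through `s` that meets `S \ s` contains one of the `#(S \ s)` sets `insert w s`,
each of which has codegree at most `C(n, r - #s - 1)`. -/
lemma exists_mem_disjoint_sdiff_of_codegree_gt (hGu : Uniform r G)
    (hGn : ∀ e ∈ G, e ⊆ range n) {s S : Finset ℕ}
    (h : #S * n.choose (r - (#s + 1)) < codegree G s) :
    ∃ e ∈ G, s ⊆ e ∧ Disjoint (e \ s) S := by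
  by_contra! hno
  have hcover : G.filter (s ⊆ ·) ⊆ (S \ s).biUnion fun w => G.filter (insert w s ⊆ ·) := by
    intro e he
    obtain ⟨heG, hse⟩ := mem_filter.1 he
    obtain ⟨w, hwe, hwS⟩ := not_disjoint_iff.1 (hno e heG hse)
    exact mem_biUnion.2 ⟨w, mem_sdiff.2 ⟨hwS, (mem_sdiff.1 hwe).2⟩,
      mem_filter.2 ⟨heG, insert_subset (mem_sdiff.1 hwe).1 hse⟩⟩
  have : codegree G s ≤ #S * n.choose (r - (#s + 1)) :=
    calc codegree G s ≤ ∑ w ∈ S \ s, codegree G (insert w s) :=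
          (card_le_card hcover).trans card_biUnion_le
      _ ≤ ∑ _w ∈ S \ s, n.choose (r - (#s + 1)) := sum_le_sum fun w hw => by
          rw [← card_insert_of_notMem (mem_sdiff.1 hw).2]
          exact codegree_le_choose hGu hGn _
      _ ≤ #S * n.choose (r - (#s + 1)) := by
          rw [sum_const, smul_eq_mul]
          exact Nat.mul_le_mul_right _ (card_le_card sdiff_subset)
  omega

def trimLowCodegree (G : HG) (t : ℕ) : HG :=
  G.filter fun e => ∀ s ⊆ e, #s = 2 → t < codegree G s

lemma trimLowCodegree_subset (t : ℕ) : trimLowCodegree G t ⊆ G := filter_subset _ _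

lemma card_le_card_trimLowCodegree_add (hGn : ∀ e ∈ G, e ⊆ range n) (t : ℕ) :
    #G ≤ #(trimLowCodegree G t) + n.choose 2 * t := by
  set low := ((range n).powersetCard 2).filter (codegree G · ≤ t)
  have hcover : G \ trimLowCodegree G t ⊆ low.biUnion fun s => G.filter (s ⊆ ·) := by
    intro e he
    obtain ⟨heG, he'⟩ := mem_sdiff.1 he
    simp only [trimLowCodegree, mem_filter, heG, true_and, not_forall, not_lt] at he'
    obtain ⟨s, hse, hs2, hst⟩ := he'
    exact mem_biUnion.2 ⟨s, mem_filter.2 ⟨mem_powersetCard.2 ⟨hse.trans (hGn e heG), hs2⟩, hst⟩,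
      mem_filter.2 ⟨heG, hse⟩⟩
  have hlow : #(G \ trimLowCodegree G t) ≤ n.choose 2 * t :=
    calc #(G \ trimLowCodegree G t) ≤ ∑ s ∈ low, codegree G s :=
          (card_le_card hcover).trans card_biUnion_le
      _ ≤ ∑ _s ∈ low, t := sum_le_sum fun s hs => (mem_filter.1 hs).2
      _ ≤ n.choose 2 * t := by
          rw [sum_const, smul_eq_mul]
          refine Nat.mul_le_mul_right _ ((card_le_card (filter_subset _ _)).trans ?_)
          simp
  have := card_sdiff_add_card_eq_card (trimLowCodegree_subset (G := G) t)
  omega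

lemma lt_codegree_of_covered_trimLowCodegree {t u v : ℕ}
    (h : Covered (trimLowCodegree G t) u v) (huv : u ≠ v) : t < codegree G {u, v} := by
  obtain ⟨e, he, hu, hv⟩ := h
  exact (mem_filter.1 he).2 _ (insert_subset hu (singleton_subset_iff.2 hv)) (card_pair huv)

end Codegree

lemma mem_uncovPairs {F : HG} {C s : Finset ℕ} :
    s ∈ uncovPairs F C ↔ s ⊆ C ∧ #s = 2 ∧ ¬ ∃ e ∈ F, s ⊆ e := by
  simp only [uncovPairs, mem_filter, mem_powersetCard, and_assoc]

def expansion (F : HG) (C : Finset ℕ) (B : Finset ℕ → Finset ℕ) : HG :=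
  F ∪ (uncovPairs F C).image fun s => s ∪ B s

section Expansion

variable {F : HG} {C : Finset ℕ} {B : Finset ℕ → Finset ℕ}

lemma covered_expansion {x y : ℕ} (hx : x ∈ C) (hy : y ∈ C) (hxy : x ≠ y) :
    Covered (expansion F C B) x y := by
  by_cases hF : ∃ e ∈ F, {x, y} ⊆ e
  · obtain ⟨e, he, hxye⟩ := hF
    exact ⟨e, mem_union_left _ he, hxye (by simp), hxye (by simp)⟩
  · have hs : {x, y} ∈ uncovPairs F C :=
      mem_uncovPairs.2 ⟨insert_subset hx (singleton_subset_iff.2 hy), card_pair hxy, hF⟩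
    exact ⟨_, mem_union_right _ (mem_image_of_mem _ hs), by simp, by simp⟩

lemma hverts_expansion_subset (hFC : hverts F ⊆ C) :
    hverts (expansion F C B) ⊆ C ∪ (uncovPairs F C).biUnion B := by
  intro v hv
  obtain ⟨e, he, hve⟩ := mem_hverts.1 hv
  rcases mem_union.1 he with heF | he
  · exact mem_union_left _ (hFC (mem_hverts.2 ⟨e, heF, hve⟩))
  · obtain ⟨s, hs, rfl⟩ := mem_image.1 he
    rcases mem_union.1 hve with hvs | hvB
    · exact mem_union_left _ ((mem_uncovPairs.1 hs).1 hvs)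
    · exact mem_union_right _ (mem_biUnion.2 ⟨s, hs, hvB⟩)

lemma hverts_expansion (hFC : hverts F ⊆ C) (hC : 2 ≤ #C) :
    hverts (expansion F C B) = C ∪ (uncovPairs F C).biUnion B := by
  refine (hverts_expansion_subset hFC).antisymm (union_subset (fun x hx => ?_) fun x hx => ?_)
  · obtain ⟨y, hy, hyx⟩ := exists_mem_ne (by omega : 1 < #C) x
    obtain ⟨e, he, hxe, -⟩ := covered_expansion (B := B) hx hy hyx.symm
    exact mem_hverts.2 ⟨e, he, hxe⟩
  · obtain ⟨s, hs, hxB⟩ := mem_biUnion.1 hx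
    exact mem_hverts.2 ⟨_, mem_union_right _ (mem_image_of_mem _ hs), mem_union_right _ hxB⟩

end Expansion

section Embedding

variable {r n : ℕ} {F G : HG} {C : Finset ℕ} {B : Finset ℕ → Finset ℕ} {ψ : ℕ → ℕ}

/-- The pair `ψ '' s₀` lies in so many edges that one of them avoids everything embedded so far;
`B s₀` is sent onto the rest of that edge. -/
lemma exists_embedding_insert (hGu : Uniform r G) (hGn : ∀ e ∈ G, e ⊆ range n)
    (hB : ∀ s ∈ uncovPairs F C, #(B s) = r - 2 ∧ Disjoint (B s) C)
    (hBdisj : ∀ s ∈ uncovPairs F C, ∀ t ∈ uncovPairs F C, s ≠ t → Disjoint (B s) (B t))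
    (hψ : Set.InjOn ψ C) {U : Finset (Finset ℕ)} (hU : U ⊆ uncovPairs F C) {s₀ : Finset ℕ}
    (hs₀ : s₀ ∈ uncovPairs F C) (hs₀U : s₀ ∉ U)
    (hrich : #(C ∪ (uncovPairs F C).biUnion B) * n.choose (r - 3) < codegree G (s₀.image ψ))
    {Ψ : ℕ → ℕ} (hΨ : Set.InjOn Ψ ↑(C ∪ U.biUnion B)) (hΨψ : Set.EqOn Ψ ψ C)
    (hΨG : ∀ s ∈ U, (s ∪ B s).image Ψ ∈ G) :
    ∃ Ψ' : ℕ → ℕ, Set.InjOn Ψ' ↑(C ∪ (insert s₀ U).biUnion B) ∧ Set.EqOn Ψ' ψ C ∧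
      ∀ s ∈ insert s₀ U, (s ∪ B s).image Ψ' ∈ G := by
  set X := C ∪ U.biUnion B
  obtain ⟨hs₀C, hs₀2, -⟩ := mem_uncovPairs.1 hs₀
  have hψs₀ : #(s₀.image ψ) = 2 := by
    rw [card_image_of_injOn (hψ.mono (coe_subset.2 hs₀C)), hs₀2]
  have hXcard : #(X.image Ψ) ≤ #(C ∪ (uncovPairs F C).biUnion B) :=
    card_image_le.trans (card_le_card (union_subset_union_right
      (biUnion_subset_biUnion_of_subset_left _ hU)))
  obtain ⟨e, heG, hse, hdisj⟩ := exists_mem_disjoint_sdiff_of_codegree_gt hGu hGn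
    (S := X.image Ψ) ((Nat.mul_le_mul_right _ hXcard).trans_lt (by rwa [hψs₀]))
  have hcard : #(B s₀) = #(e \ s₀.image ψ) := by
    rw [card_sdiff_of_subset hse, hGu e heG, hψs₀, (hB s₀ hs₀).1]
  obtain ⟨g, hg, hgmaps, -⟩ := exists_injOn_extend (f := id) (empty_subset (B s₀))
    (by simp) (by simp [Set.mapsTo_empty]) hcard.le
  have hgimage : (B s₀).image g = e \ s₀.image ψ :=
    eq_of_subset_of_card_le (image_subset_iff.2 hgmaps) (by rw [card_image_of_injOn hg, hcard])
  have hXB : Disjoint X (B s₀) := disjoint_union_left.2 ⟨(hB s₀ hs₀).2.symm,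
    (disjoint_biUnion_left _ _ _).2 fun s hs => hBdisj s (hU hs) s₀ hs₀ (ne_of_mem_of_not_mem hs hs₀U)⟩
  set Ψ' := (B s₀).piecewise g Ψ
  have hΨ'X : Set.EqOn Ψ' Ψ X := fun x hx => piecewise_eq_of_notMem _ _ _ (disjoint_left.1 hXB hx)
  have hΨ'C : Set.EqOn Ψ' ψ C := fun x hx => (hΨ'X (mem_union_left _ hx)).trans (hΨψ hx)
  have hΨ'B : Set.EqOn Ψ' g (B s₀) := fun x hx => piecewise_eq_of_mem _ _ _ hx
  refine ⟨Ψ', ?_, hΨ'C, fun s hs => ?_⟩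
  · have hdom : C ∪ (insert s₀ U).biUnion B = X ∪ B s₀ := by
      rw [biUnion_insert, union_left_comm, union_comm (B s₀)]
    rw [hdom]
    exact injOn_piecewise_union hXB hΨ hg (by rw [hgimage]; exact hdisj.symm)
  rcases mem_insert.1 hs with rfl | hsU
  · have himage : (s ∪ B s).image Ψ' = e := by
      rw [image_union, image_congr (hΨ'C.mono (coe_subset.2 hs₀C)),
        image_congr hΨ'B, hgimage, union_sdiff_of_subset hse]
    exact himage ▸ heG
  · have hsX : s ∪ B s ⊆ X :=
      union_subset_union (mem_uncovPairs.1 (hU hsU)).1 (subset_biUnion_of_mem B hsU)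
    rw [image_congr (hΨ'X.mono (coe_subset.2 hsX))]
    exact hΨG s hsU

lemma isCopyIn_expansion_of_lt_codegree (hGu : Uniform r G) (hGn : ∀ e ∈ G, e ⊆ range n)
    (hFC : hverts F ⊆ C) (hB : ∀ s ∈ uncovPairs F C, #(B s) = r - 2 ∧ Disjoint (B s) C)
    (hBdisj : ∀ s ∈ uncovPairs F C, ∀ t ∈ uncovPairs F C, s ≠ t → Disjoint (B s) (B t))
    (hψ : Set.InjOn ψ C) (hψF : ∀ e ∈ F, e.image ψ ∈ G)
    (hrich : ∀ s ∈ uncovPairs F C,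
      #(C ∪ (uncovPairs F C).biUnion B) * n.choose (r - 3) < codegree G (s.image ψ)) :
    IsCopyIn (expansion F C B) G := by
  have hextend : ∀ U ⊆ uncovPairs F C, ∃ Ψ : ℕ → ℕ, Set.InjOn Ψ ↑(C ∪ U.biUnion B) ∧
      Set.EqOn Ψ ψ C ∧ ∀ s ∈ U, (s ∪ B s).image Ψ ∈ G := by
    intro U
    induction U using Finset.induction_on with
    | empty => exact fun _ => ⟨ψ, by simpa using hψ, Set.eqOn_refl _ _, by simp⟩
    | insert s₀ U hs₀U ih =>
      intro hU
      have hs₀ := hU (mem_insert_self s₀ U)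
      obtain ⟨Ψ, hΨ, hΨψ, hΨG⟩ := ih ((subset_insert _ _).trans hU)
      exact exists_embedding_insert hGu hGn hB hBdisj hψ ((subset_insert _ _).trans hU) hs₀ hs₀U
        (hrich s₀ hs₀) hΨ hΨψ hΨG
  obtain ⟨Ψ, hΨ, hΨψ, hΨG⟩ := hextend _ Subset.rfl
  refine ⟨Ψ, hΨ.mono (coe_subset.2 (hverts_expansion_subset hFC)), fun e he => ?_⟩
  rcases mem_union.1 he with heF | he
  · have heC : e ⊆ C := fun x hx => hFC (mem_hverts.2 ⟨e, heF, hx⟩)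
    rw [image_congr (hΨψ.mono (coe_subset.2 heC))]
    exact hψF e heF
  · obtain ⟨s, hs, rfl⟩ := mem_image.1 he
    exact hΨG s hs

end Embedding

section ExpandedClique

variable {r m : ℕ} {F H G : HG}

lemma containsHFam_of_isCopyIn (hm : 1 ≤ m) (hH : IsExpandedClique r F (m + 1) H)
    (h : IsCopyIn H G) : ContainsHFam F (m + 1) G := by
  obtain ⟨C, hFC, hC, B, -, -, rfl⟩ := hH
  obtain ⟨ψ, hψ, hψG⟩ := h
  have hCH : C ⊆ hverts (expansion F C B) := by
    rw [hverts_expansion hFC (by omega)]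
    exact subset_union_left
  refine ⟨C.image ψ, by rw [card_image_of_injOn (hψ.mono (coe_subset.2 hCH)), hC],
    ⟨ψ, hψ.mono (coe_subset.2 (hFC.trans hCH)), fun e he => ?_⟩, ?_⟩
  · have heC : e ⊆ C := fun x hx => hFC (mem_hverts.2 ⟨e, he, hx⟩)
    exact mem_filter.2 ⟨hψG e (mem_union_left _ he), image_subset_image heC⟩
  · intro u hu v hv huv
    obtain ⟨x, hx, rfl⟩ := mem_image.1 hu
    obtain ⟨y, hy, rfl⟩ := mem_image.1 hv
    obtain ⟨e, he, hxe, hye⟩ := covered_expansion (B := B) hx hy fun h => huv (h ▸ rfl)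
    exact ⟨_, hψG e he, mem_image_of_mem ψ hxe, mem_image_of_mem ψ hye⟩

lemma isCopyIn_of_containsHFam_trimLowCodegree {n : ℕ} (hm : 1 ≤ m)
    (hH : IsExpandedClique r F (m + 1) H) (hGu : Uniform r G) (hGn : ∀ e ∈ G, e ⊆ range n)
    (h : ContainsHFam F (m + 1) (trimLowCodegree G (#(hverts H) * n.choose (r - 3)))) :
    IsCopyIn H G := by
  obtain ⟨C₀, hFC, hC₀, B, hB, hBdisj, rfl⟩ := hH
  obtain ⟨C, hC, ⟨φ, hφ, hφF⟩, hcov⟩ := h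
  have hφC : Set.MapsTo φ (hverts F) C := fun x hx => by
    obtain ⟨e, he, hxe⟩ := mem_hverts.1 hx
    exact (mem_filter.1 (hφF e he)).2 (mem_image_of_mem φ hxe)
  obtain ⟨ψ, hψ, hψC, hψφ⟩ := exists_injOn_extend hFC hφ hφC (hC₀.trans hC.symm).le
  refine isCopyIn_expansion_of_lt_codegree hGu hGn hFC hB hBdisj hψ (fun e he => ?_)
    fun s hs => ?_
  · have heF : e ⊆ hverts F := fun x hx => mem_hverts.2 ⟨e, he, hx⟩
    rw [image_congr (hψφ.mono (coe_subset.2 heF))]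
    exact trimLowCodegree_subset _ (mem_filter.1 (hφF e he)).1
  · obtain ⟨hsC₀, hs2, -⟩ := mem_uncovPairs.1 hs
    obtain ⟨x, y, hxy, rfl⟩ := card_eq_two.1 hs2
    have hx : x ∈ C₀ := hsC₀ (by simp)
    have hy : y ∈ C₀ := hsC₀ (by simp)
    rw [← hverts_expansion hFC (by omega), image_insert, image_singleton]
    exact lt_codegree_of_covered_trimLowCodegree (hcov _ (hψC hx) _ (hψC hy) (hψ.ne hx hy hxy))
      (hψ.ne hx hy hxy)

end ExpandedClique

section TuranNumber

variable {r n : ℕ} {P : HG → Prop}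

lemma card_le_choose {G : HG} (hGu : Uniform r G) (hGn : ∀ e ∈ G, e ⊆ range n) :
    #G ≤ n.choose r :=
  calc #G ≤ #((range n).powersetCard r) :=
        card_le_card fun e he => mem_powersetCard.2 ⟨hGn e he, hGu e he⟩
    _ = n.choose r := by simp

lemma le_exNum {G : HG} (hGu : Uniform r G) (hGn : ∀ e ∈ G, e ⊆ range n) (hP : P G) :
    #G ≤ exNum r n P :=
  le_csSup ⟨n.choose r, by rintro _ ⟨G', hu, hn, -, rfl⟩; exact card_le_choose hu hn⟩
    ⟨G, hGu, hGn, hP, rfl⟩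

lemma exNum_le {k : ℕ}
    (h : ∀ G : HG, Uniform r G → (∀ e ∈ G, e ⊆ range n) → P G → #G ≤ k) :
    exNum r n P ≤ k :=
  csSup_le' <| by rintro _ ⟨G, hu, hn, hP, rfl⟩; exact h G hu hn hP

lemma exists_card_eq_exNum (h : exNum r n P ≠ 0) :
    ∃ G : HG, Uniform r G ∧ (∀ e ∈ G, e ⊆ range n) ∧ P G ∧ #G = exNum r n P := by
  rcases Set.eq_empty_or_nonempty
    {k | ∃ G : HG, Uniform r G ∧ (∀ e ∈ G, e ⊆ range n) ∧ P G ∧ #G = k} with hE | hE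
  · exact absurd (by rw [exNum, hE, csSup_empty]; rfl) h
  · exact Nat.sSup_mem hE ⟨n.choose r, by rintro _ ⟨G, hu, hn, -, rfl⟩; exact card_le_choose hu hn⟩

lemma image_swap_subset_range {v : ℕ} (hv : v ∈ range (n + 1)) {e : Finset ℕ}
    (he : e ⊆ range (n + 1)) (hve : v ∉ e) : e.image (Equiv.swap v n) ⊆ range n := by
  intro x hx
  obtain ⟨y, hy, rfl⟩ := mem_image.1 hx
  have hyv : y ≠ v := fun h => hve (h ▸ hy)
  have hy' := mem_range.1 (he hy)
  have hv' := mem_range.1 hv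
  rw [mem_range]
  by_cases hyn : y = n
  · rw [hyn, Equiv.swap_apply_right]
    omega
  · rw [Equiv.swap_apply_of_ne_of_ne hyv hyn]
    omega

/-- Deleting a vertex `v` of an extremal graph on `[n+1]` and relabelling `v ↔ n` gives a graph
on `[n]`; averaging over `v` counts every edge `n + 1 - r` times. -/
lemma mul_exNum_succ_le (hmono : ∀ G G' : HG, G ⊆ G' → P G' → P G)
    (hperm : ∀ (σ : Equiv.Perm ℕ) (G : HG), P G → P (G.image (·.image σ))) :
    (n + 1 - r) * exNum r (n + 1) P ≤ (n + 1) * exNum r n P := by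
  rcases eq_or_ne (exNum r (n + 1) P) 0 with h0 | h0
  · simp [h0]
  obtain ⟨G, hGu, hGn, hP, hG⟩ := exists_card_eq_exNum h0
  have hdel : ∀ v ∈ range (n + 1), #(G.filter (v ∉ ·)) ≤ exNum r n P := by
    intro v hv
    have hinj : Function.Injective fun e : Finset ℕ => e.image (Equiv.swap v n) :=
      image_injective (Equiv.swap v n).injective
    rw [← card_image_of_injective _ hinj]
    refine le_exNum (fun e he => ?_) (fun e he => ?_)
      (hperm _ _ (hmono _ _ (filter_subset _ _) hP))
    · obtain ⟨d, hd, rfl⟩ := mem_image.1 he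
      rw [card_image_of_injective _ (Equiv.swap v n).injective]
      exact hGu d (mem_filter.1 hd).1
    · obtain ⟨d, hd, rfl⟩ := mem_image.1 he
      exact image_swap_subset_range hv (hGn d (mem_filter.1 hd).1) (mem_filter.1 hd).2
  have hcount : ∑ v ∈ range (n + 1), #(G.filter (v ∉ ·)) = #G * (n + 1 - r) := by
    have := sum_card_bipartiteAbove_eq_sum_card_bipartiteBelow (s := range (n + 1)) (t := G)
      (r := fun v e => v ∉ e)
    simp only [bipartiteAbove, bipartiteBelow, filter_notMem_eq_sdiff] at this
    rw [this, sum_congr rfl fun e he => ?_, sum_const, smul_eq_mul]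
    rw [card_sdiff_of_subset (hGn e he), card_range, hGu e he]
  calc (n + 1 - r) * exNum r (n + 1) P = ∑ v ∈ range (n + 1), #(G.filter (v ∉ ·)) := by
        rw [hcount, hG, mul_comm]
    _ ≤ ∑ _v ∈ range (n + 1), exNum r n P := sum_le_sum hdel
    _ = (n + 1) * exNum r n P := by simp

end TuranNumber

section Density

open Filter Topology Asymptotics

lemma exists_tendsto_exNum_div_choose {r : ℕ} {P : HG → Prop}
    (hmono : ∀ G G' : HG, G ⊆ G' → P G' → P G)
    (hperm : ∀ (σ : Equiv.Perm ℕ) (G : HG), P G → P (G.image (·.image σ))) :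
    ∃ L : ℝ, Tendsto (fun n => (exNum r n P : ℝ) / n.choose r) atTop (𝓝 L) := by
  set d : ℕ → ℝ := fun n => (exNum r n P : ℝ) / n.choose r
  have hstep : ∀ n, r ≤ n → d (n + 1) ≤ d n := by
    intro n hn
    have hpos : (0 : ℝ) < n.choose r := by exact_mod_cast Nat.choose_pos hn
    have hpos' : (0 : ℝ) < (n + 1).choose r := by exact_mod_cast Nat.choose_pos (by omega)
    rw [div_le_div_iff₀ hpos' hpos]
    have hmul : exNum r (n + 1) P * n.choose r * (n + 1)
        ≤ exNum r n P * (n + 1).choose r * (n + 1) :=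
      calc exNum r (n + 1) P * n.choose r * (n + 1)
          = (n + 1 - r) * exNum r (n + 1) P * (n + 1).choose r := by
            rw [mul_assoc, Nat.choose_mul_succ_eq]
            ring
        _ ≤ (n + 1) * exNum r n P * (n + 1).choose r :=
            Nat.mul_le_mul_right _ (mul_exNum_succ_le hmono hperm)
        _ = exNum r n P * (n + 1).choose r * (n + 1) := by ring
    exact_mod_cast Nat.le_of_mul_le_mul_right hmul n.succ_pos
  have hanti : Antitone fun k => d (k + r) := antitone_nat_of_succ_le fun k => by
    rw [Nat.add_right_comm]
    exact hstep _ (Nat.le_add_left r k)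
  refine ⟨_, (tendsto_add_atTop_iff_nat r).1 (tendsto_atTop_ciInf hanti ⟨0, ?_⟩)⟩
  rintro _ ⟨k, rfl⟩
  positivity

lemma tendsto_choose_mul_choose_div_choose {r : ℕ} (hr : 3 ≤ r) (c : ℝ) :
    Tendsto (fun n : ℕ => c * n.choose (r - 3) * n.choose 2 / n.choose r) atTop (𝓝 0) := by
  have hO : (fun n : ℕ => (n.choose (r - 3) : ℝ) * n.choose 2 / n.choose r) =O[atTop]
      fun n : ℕ => (n : ℝ) ^ (r - 3) * (n : ℝ) ^ 2 / (n : ℝ) ^ r :=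
    (((isTheta_choose _).mul (isTheta_choose _)).div (isTheta_choose _)).isBigO
  have hpow : (fun n : ℕ => (n : ℝ) ^ (r - 3) * (n : ℝ) ^ 2 / (n : ℝ) ^ r) =ᶠ[atTop]
      fun n : ℕ => (n : ℝ)⁻¹ := by
    filter_upwards [eventually_ne_atTop 0] with n hn
    obtain ⟨k, rfl⟩ := Nat.exists_eq_add_of_le' hr
    rw [Nat.add_sub_cancel]
    field_simp
    ring
  have hlim := (tendsto_inv_atTop_zero.comp tendsto_natCast_atTop_atTop).congr' hpow.symm
  simpa [mul_assoc, mul_div_assoc] using (hO.trans_tendsto hlim).const_mul c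

lemma tendsto_div_of_le_of_le_add {a b e d : ℕ → ℝ} {L : ℝ} (hd : ∀ n, 0 ≤ d n)
    (hba : ∀ n, b n ≤ a n) (hab : ∀ n, a n ≤ b n + e n)
    (hb : Tendsto (fun n => b n / d n) atTop (𝓝 L))
    (he : Tendsto (fun n => e n / d n) atTop (𝓝 0)) :
    Tendsto (fun n => a n / d n) atTop (𝓝 L) := by
  refine tendsto_of_tendsto_of_tendsto_of_le_of_le hb (by simpa using hb.add he)
    (fun n => div_le_div_of_nonneg_right (hba n) (hd n)) fun n => ?_
  simp only [← add_div]
  exact div_le_div_of_nonneg_right (hab n) (hd n)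

end Density

lemma IsExpandedClique.eq_empty_of_one {r : ℕ} {F H : HG} (hr : 2 ≤ r) (hF : Uniform r F)
    (hH : IsExpandedClique r F 1 H) : F = ∅ ∧ H = ∅ := by
  obtain ⟨C, hFC, hC, B, -, -, rfl⟩ := hH
  have hF0 : F = ∅ := eq_empty_of_forall_notMem fun e he => by
    have := card_le_card fun x hx => hFC (mem_hverts.2 ⟨e, he, hx⟩)
    have := hF e he
    omega
  have hU0 : uncovPairs F C = ∅ := eq_empty_of_forall_notMem fun s hs => by
    obtain ⟨hsC, hs2, -⟩ := mem_uncovPairs.1 hs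
    have := card_le_card hsC
    omega
  rw [hU0, image_empty, union_empty]
  exact ⟨hF0, hF0⟩

lemma exists_subset_not_containsHFam {r m n : ℕ} {F H G : HG} (hm : 1 ≤ m)
    (hH : IsExpandedClique r F (m + 1) H) (hGu : Uniform r G) (hGn : ∀ e ∈ G, e ⊆ range n)
    (hfree : ¬ IsCopyIn H G) :
    ∃ G' ⊆ G, ¬ ContainsHFam F (m + 1) G' ∧
      #G ≤ #G' + #(hverts H) * n.choose (r - 3) * n.choose 2 := by
  refine ⟨_, trimLowCodegree_subset _,
    fun h => hfree (isCopyIn_of_containsHFam_trimLowCodegree hm hH hGu hGn h), ?_⟩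
  have := card_le_card_trimLowCodegree_add hGn (#(hverts H) * n.choose (r - 3))
  linarith [mul_comm (n.choose 2) (#(hverts H) * n.choose (r - 3))]

lemma exNum_not_containsHFam_le {r m n : ℕ} {F H : HG} (hm : 1 ≤ m)
    (hH : IsExpandedClique r F (m + 1) H) :
    exNum r n (fun G => ¬ ContainsHFam F (m + 1) G) ≤ exNum r n (fun G => ¬ IsCopyIn H G) :=
  exNum_le fun _ hGu hGn hG =>
    le_exNum (P := fun G => ¬ IsCopyIn H G) hGu hGn fun hc =>
      hG (containsHFam_of_isCopyIn hm hH hc)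

lemma exNum_not_isCopyIn_le {r m n : ℕ} {F H : HG} (hm : 1 ≤ m)
    (hH : IsExpandedClique r F (m + 1) H) :
    exNum r n (fun G => ¬ IsCopyIn H G) ≤ exNum r n (fun G => ¬ ContainsHFam F (m + 1) G)
      + #(hverts H) * n.choose (r - 3) * n.choose 2 :=
  exNum_le fun G hGu hGn (hG : ¬ _) => by
    obtain ⟨G', hG'G, hG', hcard⟩ := exists_subset_not_containsHFam hm hH hGu hGn hG
    have := le_exNum (P := fun G => ¬ ContainsHFam F (m + 1) G)
      (fun e he => hGu e (hG'G he)) (fun e he => hGn e (hG'G he)) hG'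
    omega

theorem stmt_11_general (r m : ℕ) (hr : 3 ≤ r) (F : HG) (hF : Uniform r F)
    (H : HG) (hH : IsExpandedClique r F (m + 1) H) :
    (∀ n : ℕ, ∀ G : HG, Uniform r G → (∀ e ∈ G, e ⊆ Finset.range n) →
      ¬ IsCopyIn H G →
      ∃ G' : HG, G' ⊆ G ∧ ¬ ContainsHFam F (m + 1) G' ∧
        (G.card : ℝ) - ((hverts H).card : ℝ) * (n.choose (r - 3) : ℝ) * (n.choose 2 : ℝ)
          ≤ (G'.card : ℝ)) ∧
    (∃ L : ℝ,
      Filter.Tendsto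
        (fun n => (exNum r n (fun G => ¬ IsCopyIn H G) : ℝ) / (n.choose r : ℝ))
        Filter.atTop (nhds L) ∧
      Filter.Tendsto
        (fun n => (exNum r n (fun G => ¬ ContainsHFam F (m + 1) G) : ℝ) / (n.choose r : ℝ))
        Filter.atTop (nhds L)) := by
  rcases Nat.eq_zero_or_pos m with rfl | hm
  · obtain ⟨rfl, rfl⟩ := hH.eq_empty_of_one (by omega) hF
    have hcopy : ∀ G : HG, IsCopyIn ∅ G := fun G => ⟨id, by simp [hverts], by simp⟩
    have hfam : ∀ G : HG, ContainsHFam ∅ (0 + 1) G := fun G => ⟨{0}, rfl, hcopy _, by simp⟩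
    have hex : ∀ n, exNum r n (fun G => ¬ IsCopyIn ∅ G) = 0 ∧
        exNum r n (fun G => ¬ ContainsHFam ∅ (0 + 1) G) = 0 := fun n =>
      ⟨Nat.le_zero.1 (exNum_le fun G _ _ hG => absurd (hcopy G) hG),
        Nat.le_zero.1 (exNum_le fun G _ _ hG => absurd (hfam G) hG)⟩
    exact ⟨fun n G _ _ hfree => absurd (hcopy G) hfree, 0, by simp [hex], by simp [hex]⟩
  refine ⟨fun n G hGu hGn hfree => ?_, ?_⟩
  · obtain ⟨G', hG'G, hG', hcard⟩ := exists_subset_not_containsHFam hm hH hGu hGn hfree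
    exact ⟨G', hG'G, hG', by rw [sub_le_iff_le_add]; exact_mod_cast hcard⟩
  obtain ⟨L, hL⟩ := exists_tendsto_exNum_div_choose (r := r)
    (P := fun G => ¬ ContainsHFam F (m + 1) G) (fun G G' hGG' hG' hG => hG' (hG.mono hGG'))
    fun σ _ => not_containsHFam_image_perm σ
  refine ⟨L, tendsto_div_of_le_of_le_add (fun n => by positivity) (fun n => ?_) (fun n => ?_) hL
    (tendsto_choose_mul_choose_div_choose hr (#(hverts H))), hL⟩
  · exact_mod_cast exNum_not_containsHFam_le hm hH
  · exact_mod_cast exNum_not_isCopyIn_le hm hH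

/-- Every `H^F_{m+1}`-free graph can be made `ℋ^F_{m+1}`-free by
deleting `O(n^{r-1})` edges; in particular `π(H^F_{m+1}) = π(ℋ^F_{m+1})`. -/
theorem stmt_11 (r m : ℕ) (hr : 3 ≤ r) (F : HG) (hF : Uniform r F)
    (hFn : (hverts F).card ≤ m + 1)
    (H : HG) (hH : IsExpandedClique r F (m + 1) H) :
    (∀ n : ℕ, ∀ G : HG, Uniform r G → (∀ e ∈ G, e ⊆ Finset.range n) →
      ¬ IsCopyIn H G →
      ∃ G' : HG, G' ⊆ G ∧ ¬ ContainsHFam F (m + 1) G' ∧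
        (G.card : ℝ) - ((hverts H).card : ℝ) * (n.choose (r - 3) : ℝ) * (n.choose 2 : ℝ)
          ≤ (G'.card : ℝ)) ∧
    (∃ L : ℝ,
      Filter.Tendsto
        (fun n => (exNum r n (fun G => ¬ IsCopyIn H G) : ℝ) / (n.choose r : ℝ))
        Filter.atTop (nhds L) ∧
      Filter.Tendsto
        (fun n => (exNum r n (fun G => ¬ ContainsHFam F (m + 1) G) : ℝ) / (n.choose r : ℝ))
        Filter.atTop (nhds L)) :=
  stmt_11_general r m hr F hF H hH
end

section
/- Let η > 0 be a real, let G be an r-graph on [t], and let x = (x_1,…,x_t) be a weight assignment with x_i ≥ 0 and ∑_i x_i = 1 such that p_G(x) ≥ λ(G) − η. Then there exists i ∈ [t] such that x_i ≥ max_{j∈[t]} x_j − 2·r!·√η and λ_i ≥ max_{j∈[t]} λ_j − 2·r!·√η. -/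
open Finset
open scoped BigOperators Classical

/-!
Let `i` maximise the weight `x`. If `x i < √η`, every weight is below `√η ≤ 2 r! √η`, and a
maximiser of `λ_·` works. Otherwise `i` itself works: moving mass `s = √η` from `i` to `j`
changes `p_G` by `s (λ_j - λ_i) - s² r! Q`, where `Q` is a sum of products of `r - 2`
distinct weights, hence `Q ≤ (∑ x)^(r-2) ≤ 1`. The new point is still feasible, so its value is at most
`λ(G) ≤ p_G(x) + η`, which gives `λ_j - λ_i ≤ √η (1 + r!)`.
-/

namespace Finset

variable {ι : Type*} [DecidableEq ι]

theorem sum_powersetCard_prod_le_pow_sum {x : ι → ℝ} (hx : ∀ i, 0 ≤ x i) (s : Finset ι) (k : ℕ) :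
    ∑ g ∈ s.powersetCard k, ∏ u ∈ g, x u ≤ (∑ u ∈ s, x u) ^ k := by
  induction s using Finset.induction_on generalizing k with
  | empty =>
    cases k with
    | zero => simp
    | succ k => simp [powersetCard_eq_empty.mpr (by simp : #(∅ : Finset ι) < k + 1)]
  | insert a s ha ih =>
    cases k with
    | zero => simp
    | succ k =>
      have hdisj : Disjoint (s.powersetCard (k + 1)) ((s.powersetCard k).image (insert a)) := by
        refine disjoint_left.mpr fun g hg hg' => ?_
        obtain ⟨g', -, rfl⟩ := mem_image.mp hg'
        exact ha ((mem_powersetCard.mp hg).1 (mem_insert_self a g'))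
      have hinj : Set.InjOn (insert a) (s.powersetCard k : Set (Finset ι)) :=
        fun g hg g' hg' h => by
          have hag : a ∉ g := fun h' => ha ((mem_powersetCard.mp hg).1 h')
          have hag' : a ∉ g' := fun h' => ha ((mem_powersetCard.mp hg').1 h')
          rw [← erase_insert hag, ← erase_insert hag', h]
      have hσ : 0 ≤ ∑ u ∈ s, x u := sum_nonneg fun u _ => hx u
      rw [powersetCard_succ_insert ha, sum_union hdisj, sum_image hinj, sum_insert ha]
      calc ∑ g ∈ s.powersetCard (k + 1), ∏ u ∈ g, x u
            + ∑ g ∈ s.powersetCard k, ∏ u ∈ insert a g, x u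
          = ∑ g ∈ s.powersetCard (k + 1), ∏ u ∈ g, x u
            + x a * ∑ g ∈ s.powersetCard k, ∏ u ∈ g, x u := by
            rw [mul_sum]
            congr 1
            refine sum_congr rfl fun g hg => prod_insert fun h => ha ((mem_powersetCard.mp hg).1 h)
        _ ≤ (∑ u ∈ s, x u) ^ (k + 1) + x a * (∑ u ∈ s, x u) ^ k :=
            add_le_add (ih _) (mul_le_mul_of_nonneg_left (ih _) (hx a))
        _ = (x a + ∑ u ∈ s, x u) * (∑ u ∈ s, x u) ^ k := by ring
        _ ≤ (x a + ∑ u ∈ s, x u) ^ (k + 1) := by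
            rw [pow_succ' (x a + _)]
            gcongr
            · exact add_nonneg (hx a) hσ
            · linarith [hx a]

theorem prod_eq_ite_mul_prod_erase {M : Type*} [CommMonoid M] (f : ι → M) (s : Finset ι) (i : ι) :
    ∏ u ∈ s, f u = (if i ∈ s then f i else 1) * ∏ u ∈ s.erase i, f u := by
  split_ifs with h
  · exact (mul_prod_erase s f h).symm
  · rw [erase_eq_of_notMem h, one_mul]

theorem prod_add_single_sub_single {R : Type*} [CommRing R] {i j : ι} (hij : i ≠ j)
    (x : ι → R) (s : R) (e : Finset ι) :
    ∏ u ∈ e, (x + Pi.single j s - Pi.single i s : ι → R) u =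
      ∏ u ∈ e, x u
        + s * ((if j ∈ e then ∏ u ∈ e.erase j, x u else 0)
          - (if i ∈ e then ∏ u ∈ e.erase i, x u else 0))
        - s ^ 2 * (if i ∈ e ∧ j ∈ e then ∏ u ∈ (e.erase i).erase j, x u else 0) := by
  set y : ι → R := x + Pi.single j s - Pi.single i s
  have hyi : y i = x i - s := by simp [y, hij]
  have hyj : y j = x j + s := by simp [y, hij.symm]
  have hrest : ∏ u ∈ (e.erase i).erase j, y u = ∏ u ∈ (e.erase i).erase j, x u :=
    prod_congr rfl fun u hu => by
      obtain ⟨huj, hu⟩ := mem_erase.mp hu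
      obtain ⟨hui, -⟩ := mem_erase.mp hu
      simp [y, huj, hui]
  rw [prod_eq_ite_mul_prod_erase y e i, prod_eq_ite_mul_prod_erase y _ j, hrest,
    prod_eq_ite_mul_prod_erase x e i, prod_eq_ite_mul_prod_erase x (e.erase i) j,
    prod_eq_ite_mul_prod_erase x (e.erase j) i, erase_right_comm, hyi, hyj]
  simp only [mem_erase, ne_eq, hij, hij.symm, not_false_eq_true, true_and, ite_and]
  split_ifs <;> ring

end Finset

theorem subset_hverts {G : HG} {e : Finset ℕ} (he : e ∈ G) : e ⊆ hverts G :=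
  le_sup (f := id) he

theorem pPoly_mono {r : ℕ} {G : HG} {x y : ℕ → ℝ} (hx : ∀ i, 0 ≤ x i) (hxy : ∀ i, x i ≤ y i) :
    pPoly r G x ≤ pPoly r G y :=
  mul_le_mul_of_nonneg_left
    (sum_le_sum fun _ _ => prod_le_prod (fun i _ => hx i) fun i _ => hxy i) (by positivity)

theorem bddAbove_pPoly_simplex (r : ℕ) (G : HG) :
    BddAbove {v : ℝ | ∃ x : ℕ → ℝ, (∀ i, 0 ≤ x i) ∧ (∑ i ∈ hverts G, x i) = 1 ∧
      v = pPoly r G x} := by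
  refine ⟨r.factorial * #G, ?_⟩
  rintro v ⟨x, hx0, hx1, rfl⟩
  have hprod : ∀ e ∈ G, ∏ i ∈ e, x i ≤ 1 := fun e he =>
    prod_le_one (fun i _ => hx0 i) fun i hi =>
      hx1 ▸ single_le_sum (fun u _ => hx0 u) (subset_hverts he hi)
  unfold pPoly
  gcongr
  simpa using sum_le_sum hprod

theorem pPoly_le_lagrangian {r : ℕ} (hr : 0 < r) {G : HG} (hG : Uniform r G) {y : ℕ → ℝ}
    (hy0 : ∀ i, 0 ≤ y i) (hy1 : ∑ i ∈ hverts G, y i ≤ 1) : pPoly r G y ≤ lagrangian r G := by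
  obtain rfl | ⟨e, he⟩ := G.eq_empty_or_nonempty
  · simp [pPoly, lagrangian, hverts]
  obtain ⟨v, hv⟩ := card_pos.mp (hG e he ▸ hr : 0 < #e)
  have hvG : v ∈ hverts G := subset_hverts he hv
  set y' : ℕ → ℝ := y + Pi.single v (1 - ∑ i ∈ hverts G, y i)
  have hy'0 : ∀ i, 0 ≤ y' i := fun i => by
    rcases eq_or_ne i v with rfl | hiv
    · simpa [y'] using add_nonneg (hy0 i) (sub_nonneg.mpr hy1)
    · simp [y', hiv, hy0 i]
  have hy'1 : ∑ i ∈ hverts G, y' i = 1 := by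
    simp [y', sum_add_distrib, sum_pi_single', hvG]
  calc pPoly r G y ≤ pPoly r G y' := pPoly_mono hy0 fun i => by
        rcases eq_or_ne i v with rfl | hiv
        · simp [y', hy1]
        · simp [y', hiv]
    _ ≤ lagrangian r G := le_csSup (bddAbove_pPoly_simplex r G) ⟨y', hy'0, hy'1, rfl⟩

theorem lamI_eq_sum_filter (r : ℕ) (G : HG) (x : ℕ → ℝ) (i : ℕ) :
    lamI r G x i = r.factorial * ∑ e ∈ G with i ∈ e, ∏ u ∈ e.erase i, x u := by
  rw [lamI, link, sum_image]
  intro e₁ he₁ e₂ he₂ h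
  exact erase_injOn' i (mem_filter.mp he₁).2 (mem_filter.mp he₂).2 h

theorem pPoly_add_single_sub_single (r : ℕ) (G : HG) (x : ℕ → ℝ) {i j : ℕ} (hij : i ≠ j)
    (s : ℝ) :
    pPoly r G (x + Pi.single j s - Pi.single i s) =
      pPoly r G x + s * (lamI r G x j - lamI r G x i)
        - s ^ 2 * (r.factorial * ∑ e ∈ G with i ∈ e ∧ j ∈ e, ∏ u ∈ (e.erase i).erase j, x u) := by
  rw [pPoly, pPoly, sum_congr rfl fun e _ => prod_add_single_sub_single hij x s e,
    lamI_eq_sum_filter, lamI_eq_sum_filter, sum_filter, sum_filter, sum_filter,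
    sum_sub_distrib, sum_add_distrib, ← mul_sum, ← mul_sum, sum_sub_distrib]
  ring

theorem sum_prod_erase_erase_le_pow {r : ℕ} {G : HG} (hG : Uniform r G) {x : ℕ → ℝ}
    (hx : ∀ i, 0 ≤ x i) {i j : ℕ} (hij : i ≠ j) :
    ∑ e ∈ G with i ∈ e ∧ j ∈ e, ∏ u ∈ (e.erase i).erase j, x u
      ≤ (∑ u ∈ hverts G, x u) ^ (r - 2) := by
  have hinj : Set.InjOn (fun e : Finset ℕ => (e.erase i).erase j)
      (G.filter fun e => i ∈ e ∧ j ∈ e : Set (Finset ℕ)) :=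
    fun e₁ he₁ e₂ he₂ h => by
      obtain ⟨-, hi₁, hj₁⟩ := mem_filter.mp he₁
      obtain ⟨-, hi₂, hj₂⟩ := mem_filter.mp he₂
      exact erase_injOn' i hi₁ hi₂
        (erase_injOn' j (mem_erase.mpr ⟨hij.symm, hj₁⟩) (mem_erase.mpr ⟨hij.symm, hj₂⟩) h)
  rw [← sum_image (f := fun g => ∏ u ∈ g, x u) hinj]
  refine (sum_le_sum_of_subset_of_nonneg ?_ fun g _ _ => prod_nonneg fun u _ => hx u).trans
    (sum_powersetCard_prod_le_pow_sum hx (hverts G) (r - 2))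
  intro g hg
  obtain ⟨e, he, rfl⟩ := mem_image.mp hg
  obtain ⟨heG, hie, hje⟩ := mem_filter.mp he
  refine mem_powersetCard.mpr ⟨?_, ?_⟩
  · exact (erase_subset _ _).trans ((erase_subset _ _).trans (subset_hverts heG))
  · rw [card_erase_of_mem (mem_erase.mpr ⟨hij.symm, hje⟩), card_erase_of_mem hie, hG e heG]
    rfl

theorem mul_lamI_sub_lamI_le {r : ℕ} (hr : 0 < r) {G : HG} (hG : Uniform r G) {S : Finset ℕ}
    (hGS : hverts G ⊆ S) {x : ℕ → ℝ} (hx0 : ∀ u, 0 ≤ x u) (hx1 : ∑ u ∈ S, x u = 1)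
    {i j : ℕ} (hi : i ∈ S) (hj : j ∈ S) (hij : i ≠ j) {s η : ℝ} (hs : 0 ≤ s) (hsi : s ≤ x i)
    (hp : lagrangian r G - η ≤ pPoly r G x) :
    s * (lamI r G x j - lamI r G x i) ≤ η + s ^ 2 * r.factorial := by
  set y : ℕ → ℝ := x + Pi.single j s - Pi.single i s
  have hy0 : ∀ u, 0 ≤ y u := fun u => by
    rcases eq_or_ne u i with rfl | hui
    · simp [y, hij, hsi]
    · rcases eq_or_ne u j with rfl | huj
      · simp [y, hui, add_nonneg (hx0 u) hs]
      · simp [y, hui, huj, hx0 u]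
  have hy1 : ∑ u ∈ hverts G, y u ≤ 1 := by
    refine (sum_le_sum_of_subset_of_nonneg hGS fun u _ _ => hy0 u).trans_eq ?_
    simp [y, sum_add_distrib, sum_sub_distrib, sum_pi_single', hi, hj, hx1]
  have hxG : ∑ u ∈ hverts G, x u ≤ 1 :=
    hx1 ▸ sum_le_sum_of_subset_of_nonneg hGS fun u _ _ => hx0 u
  have hQ : ∑ e ∈ G with i ∈ e ∧ j ∈ e, ∏ u ∈ (e.erase i).erase j, x u ≤ 1 :=
    (sum_prod_erase_erase_le_pow hG hx0 hij).trans
      (pow_le_one₀ (sum_nonneg fun u _ => hx0 u) hxG)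
  have hyp := pPoly_le_lagrangian hr hG hy0 hy1
  rw [pPoly_add_single_sub_single r G x hij s] at hyp
  have hF : (0 : ℝ) ≤ r.factorial := by positivity
  nlinarith [mul_le_mul_of_nonneg_left hQ (mul_nonneg (sq_nonneg s) hF)]

/-- Near-optimal weightings have a vertex of near-maximum weight
and near-maximum partial derivative. -/
theorem stmt_14 (r t : ℕ) (hr : 0 < r) (η : ℝ) (hη : 0 < η)
    (G : HG) (hG : Uniform r G) (hGt : hverts G ⊆ Finset.range t)
    (x : ℕ → ℝ) (hx0 : ∀ i, 0 ≤ x i) (hx1 : (∑ i ∈ Finset.range t, x i) = 1)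
    (hp : lagrangian r G - η ≤ pPoly r G x) :
    ∃ i ∈ Finset.range t,
      (∀ j ∈ Finset.range t, x j - 2 * (r.factorial : ℝ) * Real.sqrt η ≤ x i) ∧
      (∀ j ∈ Finset.range t,
        lamI r G x j - 2 * (r.factorial : ℝ) * Real.sqrt η ≤ lamI r G x i) := by
  have hF : (1 : ℝ) ≤ r.factorial := Nat.one_le_cast.mpr r.factorial_pos
  have hsη : 0 < √η := Real.sqrt_pos.mpr hη
  have hmargin : √η ≤ 2 * r.factorial * √η := by nlinarith
  have ht : (range t).Nonempty := nonempty_range_iff.mpr (by rintro rfl; simp at hx1)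
  obtain ⟨i, hi, hxmax⟩ := exists_max_image (range t) x ht
  by_cases hbig : √η ≤ x i
  · refine ⟨i, hi, fun j hj => by linarith [hxmax j hj], fun j hj => ?_⟩
    rcases eq_or_ne j i with rfl | hji
    · linarith
    have key := mul_lamI_sub_lamI_le hr hG hGt hx0 hx1 hi hj hji.symm hsη.le hbig hp
    rw [Real.sq_sqrt hη.le] at key
    have : lamI r G x j - lamI r G x i ≤ √η * (1 + r.factorial) := by
      refine le_of_mul_le_mul_left ?_ hsη
      nlinarith [Real.mul_self_sqrt hη.le]
    nlinarith
  · obtain ⟨k, hk, hlmax⟩ := exists_max_image (range t) (lamI r G x) ht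
    exact ⟨k, hk, fun j hj => by linarith [hxmax j hj, hx0 k], fun j hj => by
      linarith [hlmax j hj]⟩
end
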